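/- Let X be a finite T₀-space and Y ⊆ X. If X collapses to Y as finite spaces (i.e., Y is obtained from X by successively removing weak points), then the order complex K(X) simplicially collapses to K(Y). -/

import Mathlib

/-!
STATEMENT 4: Let X be a finite T₀-space and Y ⊆ X. If X collapses to Y as finite spaces
(Y is obtained from X by successively removing weak points), then the order complex K(X)
simplicially collapses to K(Y).

A finite T₀-space is identified with a finite poset with the down-set topology.  Subspaces
of X are encoded as subsets A ⊆ X carrying the subspace topology; x is a weak point of A
if {y ∈ A | y < x} or {y ∈ A | y > x} is contractible.
-/

noncomputable section

/-- The Alexandrov "down-set" topology on a poset: open sets are the lower sets. -/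
def downTop (X : Type*) [Preorder X] : TopologicalSpace X := Topology.lowerSet X

/-- A subset of a poset is contractible when, with the subspace topology coming from the
down-set topology, it is homotopy equivalent to a point. -/
def SubContractible {X : Type*} [Preorder X] (A : Set X) : Prop :=
  @ContractibleSpace A (TopologicalSpace.induced Subtype.val (downTop X))

/-- `x` is a weak point of the subspace `A`: the set of points of `A` strictly below `x`
or the set of points of `A` strictly above `x` is contractible. -/
def IsWeakPointIn {X : Type*} [PartialOrder X] (A : Set X) (x : X) : Prop :=
  x ∈ A ∧ (SubContractible {y | y ∈ A ∧ y < x} ∨ SubContractible {y | y ∈ A ∧ x < y})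

/-- Elementary collapse of finite spaces: removal of a single weak point. -/
def ElemSpaceCollapse {X : Type*} [PartialOrder X] (A B : Set X) : Prop :=
  ∃ x, IsWeakPointIn A x ∧ B = A \ {x}

/-- The finite space `A` collapses to `B`: a finite sequence of elementary collapses. -/
def SpaceCollapses {X : Type*} [PartialOrder X] (A B : Set X) : Prop :=
  Relation.ReflTransGen ElemSpaceCollapse A B

/-- Elementary simplicial collapse: remove a free pair `(σ, τ)`, where `τ` is a proper
face of `σ` and of no other simplex of `K`. -/
def ElemSCollapse {V : Type*} [DecidableEq V] (K L : Finset (Finset V)) : Prop :=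
  ∃ σ ∈ K, ∃ τ ∈ K, τ ⊂ σ ∧ (∀ ρ ∈ K, τ ⊂ ρ → ρ = σ) ∧ L = (K.erase σ).erase τ

/-- `K` collapses simplicially to `L`: a finite sequence of elementary collapses. -/
def SCollapses {V : Type*} [DecidableEq V] (K L : Finset (Finset V)) : Prop :=
  Relation.ReflTransGen ElemSCollapse K L

open scoped Classical in
/-- The full subcomplex of the order complex of the poset `X` spanned by a subset `A`:
its simplices are the nonempty chains of `X` contained in `A`. -/
def orderComplexIn (X : Type*) [Preorder X] [Fintype X] (A : Set X) : Finset (Finset X) :=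
  Finset.univ.filter fun σ => σ.Nonempty ∧ IsChain (· ≤ ·) (σ : Set X) ∧ ↑σ ⊆ A

/-!
A weak point `x` of `A` is deleted by a simplicial collapse: the simplices through `x` form a cone
over its link, the link is the join of the order complexes of `Û_x` and `F̂_x`, and a collapse of
one join factor to a vertex turns the join into a cone, which collapses to its apex.

It remains to see that a contractible finite space `S` has a collapsible order complex. A homotopy
from the identity to a constant map gives a fence of comparable monotone maps. A beat point `x`
of `S` yields a monotone retraction `S → S \ {x}`, so the fence survives its removal, and its link
is a cone, so the removal is a collapse. Without beat points every map comparable to the identity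
is the identity, so the fence forces `S` to be a point.
-/

open Finset

section Collapse

variable {V : Type*} [DecidableEq V]

lemma ElemSCollapse.subset {K L : Finset (Finset V)} (h : ElemSCollapse K L) : L ⊆ K := by
  obtain ⟨σ, -, τ, -, -, -, rfl⟩ := h
  exact (erase_subset _ _).trans (erase_subset _ _)

lemma SCollapses.subset {K L : Finset (Finset V)} (h : SCollapses K L) : L ⊆ K := by
  induction h with
  | refl => exact Subset.refl _
  | tail _ hstep ih => exact hstep.subset.trans ih

lemma elemSCollapse_insert_insert {K : Finset (Finset V)} {σ τ : Finset V} (hτσ : τ ⊂ σ)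
    (hK : ∀ ρ ∈ K, ¬ τ ⊆ ρ) : ElemSCollapse (insert σ (insert τ K)) K := by
  have hτK : τ ∉ K := fun h => hK τ h subset_rfl
  have hσK : σ ∉ insert τ K := by
    rw [mem_insert, not_or]
    exact ⟨hτσ.ne', fun h => hK σ h hτσ.subset⟩
  refine ⟨σ, mem_insert_self _ _, τ, mem_insert_of_mem (mem_insert_self _ _), hτσ, ?_, ?_⟩
  · intro ρ hρ hτρ
    rcases mem_insert.1 hρ with rfl | hρ
    · rfl
    rcases mem_insert.1 hρ with rfl | hρ
    · exact absurd hτρ (lt_irrefl _)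
    · exact absurd hτρ.subset (hK ρ hρ)
  · rw [erase_insert hσK, erase_insert hτK]

/-- Removing the pairs `(μ ∪ σ, μ ∪ τ)` in order of decreasing `μ` keeps `μ ∪ τ` free. -/
lemma collapses_union_image₂_pair {B R : Finset (Finset V)} {σ τ : Finset V} (hτσ : τ ⊂ σ)
    (hR : ∀ μ ∈ R, Disjoint μ σ) (hB : ∀ ρ ∈ B, ∀ μ ∈ R, ¬ μ ∪ τ ⊆ ρ) :
    SCollapses (B ∪ image₂ (· ∪ ·) R {σ, τ}) B := by
  induction R using Finset.induction_on_max_value fun μ : Finset V ↦ #μ with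
  | empty => rw [image₂_empty_left, union_empty]; exact .refl
  | insert μ R hμR hmax ih =>
    have hμσ : Disjoint μ σ := hR μ (mem_insert_self _ _)
    have hfree : ∀ ρ ∈ B ∪ image₂ (· ∪ ·) R {σ, τ}, ¬ μ ∪ τ ⊆ ρ := by
      intro ρ hρ hsub
      rcases mem_union.1 hρ with hρ | hρ
      · exact hB ρ hρ μ (mem_insert_self _ _) hsub
      obtain ⟨μ', hμ', s, hs, rfl⟩ := mem_image₂.1 hρ
      have hsσ : s ⊆ σ := by
        rcases mem_insert.1 hs with rfl | hs
        · exact subset_rfl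
        · exact (mem_singleton.1 hs) ▸ hτσ.subset
      have hμμ' : μ ⊆ μ' :=
        (hμσ.mono_right hsσ).left_le_of_le_sup_right (subset_union_left.trans hsub)
      exact hμR (eq_of_subset_of_card_le hμμ' (hmax μ' hμ') ▸ hμ')
    have hstep : ElemSCollapse (B ∪ image₂ (· ∪ ·) (insert μ R) {σ, τ})
        (B ∪ image₂ (· ∪ ·) R {σ, τ}) := by
      have hlt : μ ∪ τ ⊂ μ ∪ σ := by
        refine ssubset_of_subset_not_subset (union_subset_union_right hτσ.subset) fun h => ?_
        exact hτσ.not_subset (hμσ.symm.left_le_of_le_sup_left (subset_union_right.trans h))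
      convert elemSCollapse_insert_insert hlt hfree using 1
      simp only [image₂_insert_left, image_insert, image_singleton]
      ext ρ
      simp only [mem_union, mem_insert, mem_singleton]
      tauto
    refine Relation.ReflTransGen.head hstep (ih (fun μ' h => ?_) fun ρ hρ μ' h => ?_)
    exacts [hR μ' (mem_insert_of_mem h), hB ρ hρ μ' (mem_insert_of_mem h)]

end Collapse

section Transport

variable {V : Type*} [DecidableEq V] {B R L L' : Finset (Finset V)}

lemma ElemSCollapse.union_image₂ (h : ElemSCollapse L L')
    (hdisj : ∀ μ ∈ R, ∀ s ∈ L, Disjoint μ s) (hB : ∀ ρ ∈ B, ∀ μ ∈ R, ∀ s ∈ L, ¬ μ ∪ s ⊆ ρ) :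
    SCollapses (B ∪ image₂ (· ∪ ·) R L) (B ∪ image₂ (· ∪ ·) R L') := by
  obtain ⟨σ, hσ, τ, hτ, hτσ, hfree, rfl⟩ := h
  have hL : L = (L.erase σ).erase τ ∪ {σ, τ} := by
    ext ρ
    simp only [mem_union, mem_erase, mem_insert, mem_singleton]
    constructor
    · tauto
    · rintro (⟨-, -, h⟩ | rfl | rfl) <;> assumption
  have hfree' : ∀ ρ ∈ B ∪ image₂ (· ∪ ·) R ((L.erase σ).erase τ), ∀ μ ∈ R, ¬ μ ∪ τ ⊆ ρ := by
    intro ρ hρ μ hμ hsub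
    rcases mem_union.1 hρ with hρ | hρ
    · exact hB ρ hρ μ hμ τ hτ hsub
    obtain ⟨μ', hμ', s, hs, rfl⟩ := mem_image₂.1 hρ
    obtain ⟨hsτ, hsσ, hsL⟩ := by simpa only [mem_erase] using hs
    have hτs : τ ⊆ s :=
      (hdisj μ' hμ' τ hτ).symm.left_le_of_le_sup_left (subset_union_right.trans hsub)
    exact hsσ (hfree s hsL (ssubset_of_subset_of_ne hτs (Ne.symm hsτ)))
  have := collapses_union_image₂_pair hτσ (fun μ hμ => hdisj μ hμ σ hσ) hfree'
  rwa [union_assoc, ← image₂_union_right, ← hL] at this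

lemma SCollapses.union_image₂ (h : SCollapses L L')
    (hdisj : ∀ μ ∈ R, ∀ s ∈ L, Disjoint μ s) (hB : ∀ ρ ∈ B, ∀ μ ∈ R, ∀ s ∈ L, ¬ μ ∪ s ⊆ ρ) :
    SCollapses (B ∪ image₂ (· ∪ ·) R L) (B ∪ image₂ (· ∪ ·) R L') := by
  induction h with
  | refl => exact .refl
  | tail hLL₁ h₁₂ ih =>
    refine ih.trans (h₁₂.union_image₂ (fun μ hμ s hs => ?_) fun ρ hρ μ hμ s hs => ?_)
    · exact hdisj μ hμ s (SCollapses.subset hLL₁ hs)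
    · exact hB ρ hρ μ hμ s (SCollapses.subset hLL₁ hs)

end Transport

section OrderComplex

variable {X : Type*} [PartialOrder X] {A U F : Set X}

variable (A) in
/-- Its order complex is the link of the vertex `x` in the order complex of `A`. -/
def link (x : X) : Set X := {y | y ∈ A ∧ (y < x ∨ x < y)}

lemma notMem_link_self {x : X} : x ∉ link A x := by
  rintro ⟨-, h | h⟩ <;> exact lt_irrefl x h

section Fintype

variable [Fintype X]

lemma mem_orderComplexIn {σ : Finset X} :
    σ ∈ orderComplexIn X A ↔ σ.Nonempty ∧ IsChain (· ≤ ·) (σ : Set X) ∧ ↑σ ⊆ A := by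
  simp [orderComplexIn]

lemma mem_insert_empty_orderComplexIn [DecidableEq X] {σ : Finset X} :
    σ ∈ insert ∅ (orderComplexIn X A) ↔ IsChain (· ≤ ·) (σ : Set X) ∧ ↑σ ⊆ A := by
  rcases σ.eq_empty_or_nonempty with rfl | hσ
  · simp [IsChain]
  · simp [mem_orderComplexIn, hσ, hσ.ne_empty]

lemma orderComplexIn_mono (h : U ⊆ F) : orderComplexIn X U ⊆ orderComplexIn X F := by
  intro σ hσ
  rw [mem_orderComplexIn] at hσ ⊢
  exact ⟨hσ.1, hσ.2.1, hσ.2.2.trans h⟩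

lemma orderComplexIn_singleton (p : X) : orderComplexIn X {p} = {{p}} := by
  ext σ
  rw [mem_orderComplexIn, Finset.mem_singleton]
  constructor
  · rintro ⟨hne, -, hsub⟩
    exact hne.subset_singleton_iff.1 (coe_subset_singleton.1 hsub)
  · rintro rfl
    simp [IsChain]

/-- `insert ∅` adjoins the empty simplex, so the right-hand side is the join of the two order
complexes. -/
lemma orderComplexIn_union [DecidableEq X] (hcomp : ∀ u ∈ U, ∀ f ∈ F, u ≤ f ∨ f ≤ u) :
    orderComplexIn X (U ∪ F) =
      orderComplexIn X U ∪ image₂ (· ∪ ·) (insert ∅ (orderComplexIn X U)) (orderComplexIn X F) := by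
  classical
  ext σ
  simp only [mem_union, mem_image₂, mem_insert_empty_orderComplexIn, mem_orderComplexIn]
  constructor
  · rintro ⟨hne, hch, hsub⟩
    by_cases hσU : ↑σ ⊆ U
    · exact Or.inl ⟨hne, hch, hσU⟩
    refine Or.inr ⟨σ.filter (· ∈ U), ⟨hch.mono (coe_subset.2 (filter_subset _ _)),
      fun z hz => (mem_filter.1 hz).2⟩, σ.filter (· ∉ U),
      ⟨?_, hch.mono (coe_subset.2 (filter_subset _ _)), fun z hz => ?_⟩,
      filter_union_filter_not_eq _ _⟩
    · obtain ⟨z, hzσ, hzU⟩ := Set.not_subset.1 hσU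
      exact ⟨z, mem_filter.2 ⟨hzσ, hzU⟩⟩
    · obtain ⟨hzσ, hzU⟩ := mem_filter.1 hz
      exact (hsub hzσ).resolve_left hzU
  · rintro (h | ⟨μ, ⟨hμch, hμU⟩, s, ⟨hsne, hsch, hsF⟩, rfl⟩)
    · exact ⟨h.1, h.2.1, h.2.2.trans Set.subset_union_left⟩
    refine ⟨hsne.mono subset_union_right, ?_, ?_⟩
    · rw [coe_union, isChain_union]
      exact ⟨hμch, hsch, fun a ha b hb _ => hcomp a (hμU ha) b (hsF hb)⟩
    · rw [coe_union]
      exact Set.union_subset_union hμU hsF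

lemma orderComplexIn_eq_union_link [DecidableEq X] {x : X} (hx : x ∈ A) :
    orderComplexIn X A = orderComplexIn X (A \ {x}) ∪ orderComplexIn X ({x} ∪ link A x) := by
  ext σ
  constructor
  · intro hσ
    obtain ⟨hne, hch, hsub⟩ := mem_orderComplexIn.1 hσ
    by_cases hxσ : x ∈ σ
    · refine mem_union_right _ (mem_orderComplexIn.2 ⟨hne, hch, fun z hz => ?_⟩)
      rcases eq_or_ne z x with rfl | hzx
      · exact Or.inl rfl
      · exact Or.inr ⟨hsub hz, (hch.total hz (mem_coe.2 hxσ)).imp hzx.lt_of_le hzx.lt_of_le'⟩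
    · refine mem_union_left _ (mem_orderComplexIn.2 ⟨hne, hch, fun z hz => ⟨hsub hz, ?_⟩⟩)
      rintro rfl
      exact hxσ hz
  · rw [mem_union]
    rintro (hσ | hσ)
    · exact orderComplexIn_mono Set.sdiff_subset hσ
    · refine orderComplexIn_mono (Set.union_subset ?_ fun y hy => hy.1) hσ
      exact Set.singleton_subset_iff.2 hx

lemma orderComplexIn_eq_union_image₂_link [DecidableEq X] {x : X} (hx : x ∈ A) :
    orderComplexIn X A = (orderComplexIn X (A \ {x}) ∪ {{x}}) ∪
      image₂ (· ∪ ·) {{x}} (orderComplexIn X (link A x)) := by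
  have hsub : orderComplexIn X (link A x) ⊆ orderComplexIn X (A \ {x}) :=
    orderComplexIn_mono fun y hy => ⟨hy.1, fun h => notMem_link_self (h ▸ hy)⟩
  rw [orderComplexIn_eq_union_link hx, orderComplexIn_union, orderComplexIn_singleton,
    image₂_insert_left]
  · simp only [empty_union, image_id']
    ext σ
    have := @hsub σ
    simp only [mem_union]
    tauto
  · rintro u rfl y ⟨-, hy | hy⟩
    exacts [Or.inr hy.le, Or.inl hy.le]

end Fintype

end OrderComplex

section OrderComplexCollapse

variable {X : Type*} [PartialOrder X] [Fintype X] {A U F G : Set X}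

lemma not_subset_of_mem_orderComplexIn (hUF : Disjoint U F) {s ρ : Finset X}
    (hs : s ∈ orderComplexIn X F) (hρ : ↑ρ ⊆ U) : ¬ s ⊆ ρ := by
  obtain ⟨⟨z, hz⟩, -, hsF⟩ := mem_orderComplexIn.1 hs
  exact fun h => hUF.notMem_of_mem_left (hρ (h hz)) (hsF hz)

variable [DecidableEq X]

lemma orderComplexIn_collapses_of_cone {v : X} (hv : v ∈ G)
    (hcomp : ∀ g ∈ G, g ≤ v ∨ v ≤ g) : SCollapses (orderComplexIn X G) {{v}} := by
  set R := orderComplexIn X (G \ {v})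
  have hdisj : Disjoint (G \ {v}) {v} := Set.disjoint_sdiff_left
  have hG : orderComplexIn X G = R ∪ image₂ (· ∪ ·) (insert ∅ R) {{v}} := by
    rw [← orderComplexIn_singleton, ← orderComplexIn_union, Set.sdiff_union_of_subset
      (Set.singleton_subset_iff.2 hv)]
    rintro g hg _ rfl
    exact hcomp g hg.1
  have hcone : R ∪ image₂ (· ∪ ·) (insert ∅ R) {{v}} = {{v}} ∪ image₂ (· ∪ ·) R {{v}, ∅} := by
    simp only [image₂_insert_right, image₂_singleton_right, image_insert, empty_union,
      union_empty, image_id']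
    ext ρ
    simp only [mem_union, mem_insert, mem_singleton]
    tauto
  rw [hG, hcone]
  refine collapses_union_image₂_pair (empty_ssubset.2 (singleton_nonempty v)) (fun μ hμ => ?_)
    fun ρ hρ μ hμ => ?_
  · exact disjoint_singleton_right.2 fun h => ((mem_orderComplexIn.1 hμ).2.2 h).2 rfl
  · rw [mem_singleton.1 hρ, union_empty]
    exact not_subset_of_mem_orderComplexIn hdisj.symm hμ (coe_singleton v).subset

lemma orderComplexIn_union_collapses (hUF : Disjoint U F)
    (hcomp : ∀ u ∈ U, ∀ f ∈ F, u ≤ f ∨ f ≤ u) {v : X} (hv : v ∈ F)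
    (hF : SCollapses (orderComplexIn X F) {{v}}) :
    SCollapses (orderComplexIn X (U ∪ F)) {{v}} := by
  rw [orderComplexIn_union hcomp]
  refine .trans (hF.union_image₂ (fun μ hμ s hs => ?_) fun ρ hρ μ _ s hs => ?_) ?_
  · rw [mem_insert_empty_orderComplexIn] at hμ
    exact disjoint_coe.1 (hUF.mono hμ.2 (mem_orderComplexIn.1 hs).2.2)
  · exact fun h => not_subset_of_mem_orderComplexIn hUF hs (mem_orderComplexIn.1 hρ).2.2
      (subset_union_right.trans h)
  · have hUv : orderComplexIn X U ∪ image₂ (· ∪ ·) (insert ∅ (orderComplexIn X U)) {{v}} =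
        orderComplexIn X (U ∪ {v}) := by
      rw [orderComplexIn_union fun u hu f hf => Set.mem_singleton_iff.1 hf ▸ hcomp u hu v hv,
        orderComplexIn_singleton]
    rw [hUv]
    refine orderComplexIn_collapses_of_cone (Set.mem_union_right _ rfl) ?_
    rintro g (hg | rfl)
    exacts [hcomp g hg v hv, Or.inl le_rfl]

/-- Collapse the cone over the order complex of `link A x` onto the edge `{x, v}`, then remove
the free pair `({x, v}, {x})`. -/
lemma orderComplexIn_collapses_diff_of_link {x v : X} (hx : x ∈ A) (hv : v ∈ link A x)
    (hlk : SCollapses (orderComplexIn X (link A x)) {{v}}) :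
    SCollapses (orderComplexIn X A) (orderComplexIn X (A \ {x})) := by
  set B := orderComplexIn X (A \ {x})
  have hxlk : Disjoint {x} (link A x) := Set.disjoint_singleton_left.2 notMem_link_self
  have hxB : ∀ ρ ∈ B, ¬ {x} ⊆ ρ := fun ρ hρ =>
    not_subset_of_mem_orderComplexIn Set.disjoint_sdiff_left
      (by rw [orderComplexIn_singleton]; exact mem_singleton_self _) (mem_orderComplexIn.1 hρ).2.2
  rw [orderComplexIn_eq_union_image₂_link hx]
  refine .trans (hlk.union_image₂ (fun μ hμ s hs => ?_) fun ρ hρ μ hμ s hs => ?_) ?_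
  · rw [mem_singleton.1 hμ, disjoint_singleton_left]
    exact fun h => notMem_link_self ((mem_orderComplexIn.1 hs).2.2 h)
  · rw [mem_singleton.1 hμ]
    rcases mem_union.1 hρ with hρ | hρ
    · exact fun h => hxB ρ hρ (subset_union_left.trans h)
    · rw [mem_singleton.1 hρ]
      exact fun h => not_subset_of_mem_orderComplexIn hxlk hs (coe_singleton x).subset
        (subset_union_right.trans h)
  · have hpair : B ∪ {{x}} ∪ image₂ (· ∪ ·) {{x}} {{v}} = B ∪ image₂ (· ∪ ·) {{x}} {{v}, ∅} := by
      simp only [image₂_singleton_left, image_insert, image_singleton, union_empty]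
      ext ρ
      simp only [mem_union, mem_insert, mem_singleton]
      tauto
    rw [hpair]
    refine collapses_union_image₂_pair (empty_ssubset.2 (singleton_nonempty v)) (fun μ hμ => ?_)
      fun ρ hρ μ hμ => ?_
    · rw [mem_singleton.1 hμ, disjoint_singleton]
      exact fun h => notMem_link_self (h ▸ hv)
    · rw [mem_singleton.1 hμ, union_empty]
      exact hxB ρ hρ

end OrderComplexCollapse

section Fence

open Relation Topology unitInterval

/-- For finite spaces this is equivalent to contractibility. -/
def IsFenceContractible (α : Type*) [Preorder α] : Prop :=
  ∃ c : α, ReflTransGen (SymmGen (· ≤ ·)) (OrderHom.id : α →o α) (OrderHom.const α c)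

lemma IsFenceContractible.of_retraction {α β : Type*} [Preorder α] [Preorder β] (r : α →o β)
    (j : β →o α) (hrj : r.comp j = OrderHom.id) (h : IsFenceContractible α) :
    IsFenceContractible β := by
  obtain ⟨c, hc⟩ := h
  refine ⟨r c, ?_⟩
  have : ReflTransGen (SymmGen (· ≤ ·)) (r.comp (OrderHom.id.comp j))
      (r.comp ((OrderHom.const α c).comp j)) :=
    ReflTransGen.lift (fun f => r.comp (f.comp j)) (fun f g hfg =>
      hfg.imp (fun h b => r.monotone (h (j b))) (fun h b => r.monotone (h (j b)))) _ _ hc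
  rwa [OrderHom.id_comp, hrj] at this

instance Topology.IsLowerSet.subtype {α : Type*} [Preorder α] [TopologicalSpace α]
    [Topology.IsLowerSet α] (s : Set α) : Topology.IsLowerSet s := by
  rw [Topology.isLowerSet_iff_nhds]
  intro a
  rw [nhds_induced, Topology.IsLowerSet.nhds_eq_principal_Iic, Filter.comap_principal]
  rfl

/-- A homotopy from the identity to a constant is locally constant up to comparability,
so along the connected interval it yields a fence. -/
lemma IsFenceContractible.of_contractibleSpace (α : Type*) [PartialOrder α] [Finite α]
    [TopologicalSpace α] [Topology.IsLowerSet α] [ContractibleSpace α] :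
    IsFenceContractible α := by
  obtain ⟨c, ⟨H⟩⟩ := id_nullhomotopic α
  let f : I → α →o α := fun t =>
    ⟨fun a => H (t, a), Topology.IsLowerSet.monotone_iff_continuous.2
      (H.continuous.comp (Continuous.prodMk_right t))⟩
  have hlocal : ∀ t, ∀ᶠ s in 𝓝 t, f s ≤ f t := by
    intro t
    refine Filter.eventually_all.2 fun a => ?_
    exact (H.continuous.comp (Continuous.prodMk_left a)).continuousAt.eventually_mem
      ((Topology.IsLowerSet.isOpen_iff_isLowerSet.2 (isLowerSet_Iic _)).mem_nhds le_rfl)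
  have hfence := PreconnectedSpace.induction₂'
    (fun s t => ReflTransGen (SymmGen (· ≤ ·)) (f s) (f t))
    (fun t => (hlocal t).mono fun s hs => ⟨.single (Or.inr hs), .single (Or.inl hs)⟩)
    ⟨fun _ _ _ => ReflTransGen.trans⟩ 0 1
  have h0 : f 0 = OrderHom.id := OrderHom.ext _ _ (funext H.apply_zero)
  have h1 : f 1 = OrderHom.const α c := OrderHom.ext _ _ (funext H.apply_one)
  exact ⟨c, h0 ▸ h1 ▸ hfence⟩

lemma SubContractible.isFenceContractible {X : Type*} [PartialOrder X] [Finite X] {S : Set X}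
    (h : SubContractible S) : IsFenceContractible S := by
  let : TopologicalSpace X := downTop X
  have : Topology.IsLowerSet X := ⟨rfl⟩
  have : ContractibleSpace S := h
  exact .of_contractibleSpace S

end Fence

section BeatPoint

open Relation

variable {X : Type*} [PartialOrder X] {A : Set X} {x y : X}

variable (A) in
/-- `y` is the maximum of `{z ∈ A | z < x}` or the minimum of `{z ∈ A | x < z}`:
`x` is a beat point of `A`. -/
def IsBeatPoint (x y : X) : Prop :=
  y ∈ link A x ∧ ∀ z ∈ A, (z < x → z ≤ y) ∧ (x < z → y ≤ z)

lemma IsBeatPoint.isFenceContractible_diff (hxy : IsBeatPoint A x y)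
    (h : IsFenceContractible A) : IsFenceContractible ↥(A \ {x}) := by
  have hyx : y ≠ x := fun h => notMem_link_self (h ▸ hxy.1)
  classical
  let r : A →o ↥(A \ {x}) :=
    ⟨fun a => if ha : (a : X) = x then ⟨y, hxy.1.1, hyx⟩ else ⟨a, a.2, ha⟩, fun a b hab => by
      have hdom (z : A) := hxy.2 z z.2
      dsimp only
      split_ifs with ha hb hb
      · exact le_rfl
      · exact (hdom b).2 (lt_of_le_of_ne (ha ▸ Subtype.coe_le_coe.2 hab) (Ne.symm hb))
      · exact (hdom a).1 (lt_of_le_of_ne (hb ▸ Subtype.coe_le_coe.2 hab) ha)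
      · exact hab⟩
  let j : ↥(A \ {x}) →o A := ⟨fun b => ⟨b, b.2.1⟩, fun _ _ h => h⟩
  refine h.of_retraction r j (OrderHom.ext _ _ (funext fun b => ?_))
  exact dif_neg b.2.2

variable (A) in
/-- Stong's minimal finite spaces. -/
def IsMinimalFiniteSpace : Prop := ∀ x ∈ A, ∀ y, ¬ IsBeatPoint A x y

section Finite

variable [Finite A] (hA : IsMinimalFiniteSpace A)
include hA

/-- A minimal point moved by `f ≤ id` is a beat point. -/
lemma IsMinimalFiniteSpace.eq_id_of_le_id {f : A →o A} (hf : f ≤ OrderHom.id) :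
    f = OrderHom.id := by
  by_contra hne
  obtain ⟨a, hfa, hmin⟩ := wellFounded_lt.has_min {a | f a ≠ a}
    (not_forall.1 fun h => hne (OrderHom.ext _ _ (funext h)))
  have hlt : f a < a := lt_of_le_of_ne (hf a) hfa
  refine hA a a.2 (f a) ⟨⟨(f a).2, Or.inl hlt⟩, fun z hz => ⟨fun hza => ?_, fun haz => ?_⟩⟩
  · have hfix : f ⟨z, hz⟩ = ⟨z, hz⟩ := not_not.1 fun h => hmin _ h hza
    have := f.monotone (show (⟨z, hz⟩ : A) ≤ a from hza.le)
    rwa [hfix] at this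
  · exact (hlt.trans (show a < ⟨z, hz⟩ from haz)).le

lemma IsMinimalFiniteSpace.eq_id_of_id_le {f : A →o A} (hf : OrderHom.id ≤ f) :
    f = OrderHom.id := by
  by_contra hne
  obtain ⟨a, hfa, hmax⟩ := wellFounded_gt.has_min {a | f a ≠ a}
    (not_forall.1 fun h => hne (OrderHom.ext _ _ (funext h)))
  have hlt : a < f a := lt_of_le_of_ne (hf a) (Ne.symm hfa)
  refine hA a a.2 (f a) ⟨⟨(f a).2, Or.inr hlt⟩, fun z hz => ⟨fun hza => ?_, fun haz => ?_⟩⟩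
  · exact ((show ⟨z, hz⟩ < a from hza).trans hlt).le
  · have hfix : f ⟨z, hz⟩ = ⟨z, hz⟩ := not_not.1 fun h => hmax _ h haz
    have := f.monotone (show a ≤ ⟨z, hz⟩ from haz.le)
    rwa [hfix] at this

lemma IsMinimalFiniteSpace.eq_singleton_of_isFenceContractible (h : IsFenceContractible A) :
    ∃ p, A = {p} := by
  obtain ⟨c, hc⟩ := h
  have hid : ∀ g, ReflTransGen (SymmGen (· ≤ ·)) (OrderHom.id : A →o A) g → g = OrderHom.id := by
    intro g hg
    induction hg with
    | refl => rfl
    | tail _ hstep ih =>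
      subst ih
      exact hstep.elim hA.eq_id_of_id_le hA.eq_id_of_le_id
  refine ⟨c, Set.eq_singleton_iff_unique_mem.2 ⟨c.2, fun a ha => ?_⟩⟩
  exact congrArg Subtype.val (DFunLike.congr_fun (hid _ hc) ⟨a, ha⟩).symm

end Finite

end BeatPoint

section WeakPoint

variable {X : Type*} [PartialOrder X] [Fintype X] [DecidableEq X]

lemma IsBeatPoint.orderComplexIn_collapses {A : Set X} {x y : X} (hx : x ∈ A) (hxy : IsBeatPoint A x y) :
    SCollapses (orderComplexIn X A) (orderComplexIn X (A \ {x})) := by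
  refine orderComplexIn_collapses_diff_of_link hx hxy.1 (orderComplexIn_collapses_of_cone hxy.1 ?_)
  rintro z ⟨hz, hzx | hxz⟩
  exacts [Or.inl ((hxy.2 z hz).1 hzx), Or.inr ((hxy.2 z hz).2 hxz)]

/-- Removing beat points one at a time reaches a space without beat points, which is a point. -/
lemma IsFenceContractible.exists_orderComplexIn_collapses {A : Set X} (h : IsFenceContractible A) :
    ∃ p ∈ A, SCollapses (orderComplexIn X A) {{p}} := by
  by_cases hmin : IsMinimalFiniteSpace A
  · obtain ⟨p, rfl⟩ := hmin.eq_singleton_of_isFenceContractible h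
    exact ⟨p, rfl, by rw [orderComplexIn_singleton]; exact .refl⟩
  · obtain ⟨x, hx, y, hxy⟩ : ∃ x ∈ A, ∃ y, IsBeatPoint A x y := by
      simpa [IsMinimalFiniteSpace] using hmin
    obtain ⟨p, hp, hcol⟩ := (hxy.isFenceContractible_diff h).exists_orderComplexIn_collapses
    exact ⟨p, hp.1, (hxy.orderComplexIn_collapses hx).trans hcol⟩
termination_by A.ncard
decreasing_by exact Set.ncard_sdiff_singleton_lt_of_mem hx (Set.toFinite A)

/-- The link of `x` is the join of the order complexes of `Û_x` and `F̂_x`, one of which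
is collapsible. -/
lemma IsWeakPointIn.orderComplexIn_collapses {A : Set X} {x : X} (hw : IsWeakPointIn A x) :
    SCollapses (orderComplexIn X A) (orderComplexIn X (A \ {x})) := by
  obtain ⟨hx, hc⟩ := hw
  set D := {y | y ∈ A ∧ y < x}
  set U := {y | y ∈ A ∧ x < y}
  have hlink : link A x = D ∪ U := Set.ext fun y => and_or_left
  have hDU : Disjoint D U := Set.disjoint_left.2 fun y hD hU => lt_asymm hD.2 hU.2
  have hcomp : ∀ d ∈ D, ∀ u ∈ U, d ≤ u := fun d hd u hu => (hd.2.trans hu.2).le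
  rcases hc with hD | hU
  · obtain ⟨v, hv, hcol⟩ := hD.isFenceContractible.exists_orderComplexIn_collapses
    refine orderComplexIn_collapses_diff_of_link hx (by rw [hlink]; exact .inl hv) ?_
    rw [hlink, Set.union_comm]
    exact orderComplexIn_union_collapses hDU.symm (fun u hu d hd => .inr (hcomp d hd u hu)) hv hcol
  · obtain ⟨v, hv, hcol⟩ := hU.isFenceContractible.exists_orderComplexIn_collapses
    refine orderComplexIn_collapses_diff_of_link hx (by rw [hlink]; exact .inr hv) ?_
    rw [hlink]
    exact orderComplexIn_union_collapses hDU (fun d hd u hu => .inl (hcomp d hd u hu)) hv hcol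

end WeakPoint

theorem orderComplex_collapses_of_space_collapses (X : Type) [PartialOrder X] [Fintype X]
    [DecidableEq X] (Y : Set X) (h : SpaceCollapses Set.univ Y) :
    SCollapses (orderComplexIn X Set.univ) (orderComplexIn X Y) := by
  induction h with
  | refl => exact .refl
  | tail _ hstep ih =>
    obtain ⟨x, hw, rfl⟩ := hstep
    exact ih.trans hw.orderComplexIn_collapses
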